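/- Fix λ > 0, c̄ > 0, ū > 0. The function a*(b) = b + ((c̄+λ+ū)/(b(2c̄+λ)))·(ū(2c̄+λ+ū) − b² − √((ū²−b²)((2c̄+λ+ū)²−b²))) is monotonically nondecreasing in b on (0, ū). -/
import Mathlib


/-- The closed-form optimal cache-rate deviation `a*`. -/
noncomputable def aStar (lam ub cb b : ℝ) : ℝ :=
  b + (cb + lam + ub) / (b * (2 * cb + lam)) *
    (ub * (2 * cb + lam + ub) - b ^ 2 -
      Real.sqrt ((ub ^ 2 - b ^ 2) * ((2 * cb + lam + ub) ^ 2 - b ^ 2)))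

lemma aStar_key (lam ub cb b : ℝ) (hlam : 0 < lam) (hub : 0 < ub) (hcb : 0 < cb)
    (hb0 : 0 < b) (hbu : b < ub) :
    aStar lam ub cb b = b + (cb + lam + ub) * (2 * cb + lam) *
      (b / (ub * (2 * cb + lam + ub) - b ^ 2 +
        Real.sqrt ((ub ^ 2 - b ^ 2) * ((2 * cb + lam + ub) ^ 2 - b ^ 2)))) := by
  unfold aStar
  set K := 2 * cb + lam + ub with hK
  have hKu : ub < K := by rw [hK]; linarith
  have h1 : 0 ≤ ub ^ 2 - b ^ 2 := by nlinarith
  have h2 : 0 ≤ K ^ 2 - b ^ 2 := by nlinarith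
  have hP : 0 ≤ (ub ^ 2 - b ^ 2) * (K ^ 2 - b ^ 2) := mul_nonneg h1 h2
  set s := Real.sqrt ((ub ^ 2 - b ^ 2) * (K ^ 2 - b ^ 2)) with hs
  have hs2 : s ^ 2 = (ub ^ 2 - b ^ 2) * (K ^ 2 - b ^ 2) := Real.sq_sqrt hP
  have hs0 : 0 ≤ s := Real.sqrt_nonneg _
  have hbk : b ^ 2 < ub * K := by nlinarith
  have hD : 0 < ub * K - b ^ 2 + s := by linarith
  have hid : ub * K - b ^ 2 - s = b ^ 2 * (K - ub) ^ 2 / (ub * K - b ^ 2 + s) := by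
    rw [eq_div_iff (ne_of_gt hD)]
    linear_combination -hs2
  rw [hid]
  field_simp
  ring

/-- The optimal cache-rate deviation `a*(b)` is monotonically nondecreasing in
the user-rate deviation `b` on `(0, ū)`. -/
theorem aStar_monotone (lam ub cb : ℝ) (hlam : 0 < lam) (hub : 0 < ub) (hcb : 0 < cb) :
    MonotoneOn (fun b => aStar lam ub cb b) (Set.Ioo 0 ub) := by
  intro x hx y hy hxy
  simp only
  rw [aStar_key lam ub cb x hlam hub hcb hx.1 hx.2,
      aStar_key lam ub cb y hlam hub hcb hy.1 hy.2]
  set K := 2 * cb + lam + ub with hK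
  have hKu : ub < K := by rw [hK]; linarith
  have hx0 := hx.1; have hxu := hx.2
  have hy0 := hy.1; have hyu := hy.2
  have hx1 : 0 ≤ ub ^ 2 - x ^ 2 := by nlinarith
  have hx2 : 0 ≤ K ^ 2 - x ^ 2 := by nlinarith
  have hy1 : 0 ≤ ub ^ 2 - y ^ 2 := by nlinarith
  have hy2 : 0 ≤ K ^ 2 - y ^ 2 := by nlinarith
  have hPx : 0 ≤ (ub ^ 2 - x ^ 2) * (K ^ 2 - x ^ 2) := mul_nonneg hx1 hx2
  have hPy : 0 ≤ (ub ^ 2 - y ^ 2) * (K ^ 2 - y ^ 2) := mul_nonneg hy1 hy2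
  have hsx0 : 0 ≤ Real.sqrt ((ub ^ 2 - x ^ 2) * (K ^ 2 - x ^ 2)) := Real.sqrt_nonneg _
  have hsy0 : 0 ≤ Real.sqrt ((ub ^ 2 - y ^ 2) * (K ^ 2 - y ^ 2)) := Real.sqrt_nonneg _
  set sx := Real.sqrt ((ub ^ 2 - x ^ 2) * (K ^ 2 - x ^ 2)) with hsx
  set sy := Real.sqrt ((ub ^ 2 - y ^ 2) * (K ^ 2 - y ^ 2)) with hsy
  have hsle : sy ≤ sx := by
    apply Real.sqrt_le_sqrt
    have hstep : (ub ^ 2 - y ^ 2) * (K ^ 2 - y ^ 2) ≤ (ub ^ 2 - x ^ 2) * (K ^ 2 - y ^ 2) := by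
      apply mul_le_mul_of_nonneg_right _ hy2
      nlinarith
    have hstep2 : (ub ^ 2 - x ^ 2) * (K ^ 2 - y ^ 2) ≤ (ub ^ 2 - x ^ 2) * (K ^ 2 - x ^ 2) := by
      apply mul_le_mul_of_nonneg_left _ hx1
      nlinarith
    linarith
  have hxk : x ^ 2 < ub * K := by nlinarith
  have hyk : y ^ 2 < ub * K := by nlinarith
  have hDx : 0 < ub * K - x ^ 2 + sx := by linarith
  have hDy : 0 < ub * K - y ^ 2 + sy := by linarith
  have hdiv : x / (ub * K - x ^ 2 + sx) ≤ y / (ub * K - y ^ 2 + sy) := by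
    rw [div_le_div_iff₀ hDx hDy]
    have h1 : x * sy ≤ y * sx := mul_le_mul hxy hsle hsy0 hy0.le
    have h2 : 0 ≤ x * y * (y - x) :=
      mul_nonneg (mul_nonneg hx0.le hy0.le) (by linarith)
    have hKpos : 0 < ub * K := mul_pos hub (lt_trans hub hKu)
    have h3 : x * (ub * K) ≤ y * (ub * K) := mul_le_mul_of_nonneg_right hxy hKpos.le
    have h4 : x * (ub * K - y ^ 2 + sy) - y * (ub * K - x ^ 2 + sx) =
        (x * (ub * K) - y * (ub * K)) + (x * sy - y * sx) - x * y * (y - x) := by ring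
    linarith [h1, h2, h3, h4]
  have hA : 0 ≤ (cb + lam + ub) * (2 * cb + lam) := by nlinarith
  have := mul_le_mul_of_nonneg_left hdiv hA
  linarith
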